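/- arXiv:0802.4211 — 3 statements merged into one kernel-verified Lean document; each statement's English description precedes it below -/
import Mathlib

section
/- For two points on the same horizontal segment (Δp = 0) whose orbits remain on the same side of the discontinuity for t steps, the distance between their images under φ^t remains exactly |Δq| for all such t. -/
/-- The step function `θ` on `ℝ` (period 1): `1` if the fractional part lies in
`[0,1/2)`, `-1` otherwise. -/
noncomputable def triThetaR (q : ℝ) : ℝ := if Int.fract q < 1/2 then 1 else -1

/-- The triangle map in the local Euclidean chart (no wrap-around). -/
noncomputable def triLift (α β : ℝ) : ℝ × ℝ → ℝ × ℝ :=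
  fun x => (x.1 + x.2 + α * triThetaR x.1 + β, x.2 + α * triThetaR x.1 + β)

lemma triLift_diff (α β q p Δq : ℝ) (t : ℕ)
    (hside : ∀ k < t, triThetaR (((triLift α β)^[k] (q, p)).1) =
      triThetaR (((triLift α β)^[k] (q + Δq, p)).1)) :
    ((triLift α β)^[t] (q + Δq, p)).1 = ((triLift α β)^[t] (q, p)).1 + Δq ∧
    ((triLift α β)^[t] (q + Δq, p)).2 = ((triLift α β)^[t] (q, p)).2 := by
  induction t with
  | zero => simp
  | succ n ih =>
    obtain ⟨h1, h2⟩ := ih (fun k hk => hside k (Nat.lt_succ_of_lt hk))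
    have hθ := hside n (Nat.lt_succ_self n)
    rw [h1] at hθ
    simp only [Function.iterate_succ_apply', triLift, h1, h2, ← hθ]
    exact ⟨by ring, trivial⟩

/-- Points on the same horizontal segment (`Δp = 0`) staying on the same side of
the discontinuity keep their distance `|Δq|` under `φ^t`. -/
theorem triLift_horizontal_distance (α β q p Δq : ℝ) (t : ℕ)
    (hside : ∀ k < t, triThetaR (((triLift α β)^[k] (q, p)).1) =
      triThetaR (((triLift α β)^[k] (q + Δq, p)).1)) :
    Real.sqrt ((((triLift α β)^[t] (q + Δq, p)).1 - ((triLift α β)^[t] (q, p)).1) ^ 2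
        + (((triLift α β)^[t] (q + Δq, p)).2 - ((triLift α β)^[t] (q, p)).2) ^ 2)
      = |Δq| := by
  obtain ⟨h1, h2⟩ := triLift_diff α β q p Δq t hside
  rw [h1, h2]
  simp [Real.sqrt_sq_eq_abs]
end

section
/- For two points on the same vertical segment (Δq = 0) whose orbits remain on the same side of the discontinuity for t steps, the distance between their images under φ^t equals |Δp|·√(1+t²), i.e., grows linearly in t. -/
/-- Points on the same vertical segment (`Δq = 0`) staying on the same side of the
discontinuity have distance `|Δp|·√(1+t²)` after `t` steps. -/
theorem triLift_vertical_distance (α β q p Δp : ℝ) (t : ℕ)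
    (hside : ∀ k < t, triThetaR (((triLift α β)^[k] (q, p)).1) =
      triThetaR (((triLift α β)^[k] (q, p + Δp)).1)) :
    Real.sqrt ((((triLift α β)^[t] (q, p + Δp)).1 - ((triLift α β)^[t] (q, p)).1) ^ 2
        + (((triLift α β)^[t] (q, p + Δp)).2 - ((triLift α β)^[t] (q, p)).2) ^ 2)
      = |Δp| * Real.sqrt (1 + (t : ℝ) ^ 2) := by
  have key : ∀ k ≤ t,
      ((triLift α β)^[k] (q, p + Δp)).1 - ((triLift α β)^[k] (q, p)).1 = k * Δp ∧
      ((triLift α β)^[k] (q, p + Δp)).2 - ((triLift α β)^[k] (q, p)).2 = Δp := by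
    intro k hk
    induction k with
    | zero => simp
    | succ n ih =>
      have hn : n ≤ t := Nat.le_of_succ_le hk
      obtain ⟨h1, h2⟩ := ih hn
      have hθ := hside n (Nat.lt_of_succ_le hk)
      rw [Function.iterate_succ_apply', Function.iterate_succ_apply']
      simp only [triLift, Nat.cast_succ]
      constructor <;> (rw [← hθ]; ring_nf; nlinarith [h1, h2])
  obtain ⟨h1, h2⟩ := key t le_rfl
  rw [h1, h2]
  rw [show (↑t * Δp) ^ 2 + Δp ^ 2 = Δp ^ 2 * (1 + (t:ℝ)^2) by ring,
    Real.sqrt_mul (sq_nonneg _), Real.sqrt_sq_eq_abs]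
end

section
/- The unique solution ψ on [0,∞) of the integro-differential equation ψ(χ) + χψ'(χ) + χψ(χ) = ∫_χ^∞ ψ(x) dx, with boundary conditions ψ bounded at 0, ψ(χ) → 0 as χ → ∞, and normalization ∫₀^∞ ψ = 1, is ψ(χ) = e^{-χ}. -/
/-!
The tail `T χ = ∫_χ^∞ ψ` has `T' = -ψ`, so the equation says `(χ (T - ψ))' = T - ψ - χψ - χψ' = 0`.
Since `χ (T - ψ)` vanishes at `0`, `T = ψ` on `[0, ∞)`; then `T' = -T` with `T 0 = ∫_0^∞ ψ = 1`,
so `ψ χ = T χ = e^{-χ}`.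
-/

open MeasureTheory Filter Set Real

section

variable {E : Type*} [NormedAddCommGroup E] [NormedSpace ℝ E]

theorem hasDerivWithinAt_integral_Ioi [CompleteSpace E] {f : ℝ → E} {a x : ℝ} (hf : Continuous f)
    (hint : IntegrableOn f (Ioi a)) (hx : a ≤ x) :
    HasDerivWithinAt (fun y ↦ ∫ t in Ioi y, f t) (-f x) (Ici a) x := by
  have hderiv : HasDerivAt (fun y ↦ (∫ t in Ioi a, f t) - ∫ t in a..y, f t) (-f x) x :=
    (intervalIntegral.integral_hasDerivAt_right (hf.intervalIntegrable a x)
      hf.stronglyMeasurable.stronglyMeasurableAtFilter hf.continuousAt).const_sub _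
  refine hderiv.hasDerivWithinAt.congr_of_mem (fun y hy ↦ ?_) hx
  rw [← intervalIntegral.integral_Ioi_sub_Ioi hint hy, sub_sub_cancel]

theorem eq_of_hasDerivWithinAt_Ici_zero {g : ℝ → E} {a x : ℝ}
    (hg : ∀ y ∈ Ici a, HasDerivWithinAt g 0 (Ici a) y) (hx : a ≤ x) : g x = g a :=
  constant_of_has_deriv_right_zero
    (fun y hy ↦ (hg y hy.1).continuousWithinAt.mono Icc_subset_Ici_self)
    (fun y hy ↦ (hg y hy.1).mono (Ici_subset_Ici.2 hy.1)) x ⟨hx, le_rfl⟩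

end

theorem eq_mul_exp_of_hasDerivWithinAt_Ici_neg {g : ℝ → ℝ} {a x : ℝ}
    (hg : ∀ y ∈ Ici a, HasDerivWithinAt g (-g y) (Ici a) y) (hx : a ≤ x) :
    g x = g a * exp (-(x - a)) := by
  have hconst : g x * exp x = g a * exp a := by
    refine eq_of_hasDerivWithinAt_Ici_zero (g := fun y ↦ g y * exp y) (fun y hy ↦ ?_) hx
    exact ((hg y hy).mul (hasDerivAt_exp y).hasDerivWithinAt).congr_deriv (by ring)
  rw [neg_sub, exp_sub, mul_div_assoc', ← hconst]
  field_simp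

theorem eq_of_scaling_equation {ψ T : ℝ → ℝ} (hψ : Differentiable ℝ ψ)
    (hT : ∀ x ∈ Ici (0 : ℝ), HasDerivWithinAt T (-ψ x) (Ici 0) x)
    (heq : ∀ x : ℝ, 0 ≤ x → ψ x + x * deriv ψ x + x * ψ x = T x) {x : ℝ} (hx : 0 ≤ x) :
    T x = ψ x := by
  have hconst : x * (T x - ψ x) = 0 * (T 0 - ψ 0) := by
    refine eq_of_hasDerivWithinAt_Ici_zero (g := fun y ↦ y * (T y - ψ y)) (fun y hy ↦ ?_) hx
    refine ((hasDerivWithinAt_id (s := Ici 0) (x := y)).mul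
      ((hT y hy).sub (hψ y).hasDerivAt.hasDerivWithinAt)).congr_deriv ?_
    simp only [Pi.sub_apply, id_eq, one_mul]
    linarith [heq y hy]
  rcases hx.eq_or_lt with rfl | hpos
  · linarith [heq 0 le_rfl]
  · rw [zero_mul, mul_eq_zero] at hconst
    exact sub_eq_zero.1 (hconst.resolve_left hpos.ne')

theorem scaling_equation_unique_solution_general (ψ : ℝ → ℝ)
    (hC : ContDiff ℝ 1 ψ)
    (hint : IntegrableOn ψ (Set.Ici (0:ℝ)))
    (heq : ∀ χ : ℝ, 0 ≤ χ →
      ψ χ + χ * deriv ψ χ + χ * ψ χ = ∫ x in Set.Ioi χ, ψ x)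
    (hnorm : ∫ x in Set.Ici (0:ℝ), ψ x = 1) :
    ∀ χ : ℝ, 0 ≤ χ → ψ χ = Real.exp (-χ) := by
  intro χ hχ
  set T : ℝ → ℝ := fun x ↦ ∫ t in Ioi x, ψ t
  have hT : ∀ x ∈ Ici (0 : ℝ), HasDerivWithinAt T (-ψ x) (Ici 0) x := fun x hx ↦
    hasDerivWithinAt_integral_Ioi hC.continuous (hint.mono_set Ioi_subset_Ici_self) hx
  have hTψ : ∀ x ∈ Ici (0 : ℝ), T x = ψ x := fun x hx ↦
    eq_of_scaling_equation (hC.differentiable one_ne_zero) hT heq hx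
  have hT0 : T 0 = 1 := by rw [← hnorm, integral_Ici_eq_integral_Ioi]
  have hTexp := eq_mul_exp_of_hasDerivWithinAt_Ici_neg (fun x hx ↦ hTψ x hx ▸ hT x hx) hχ
  rw [← hTψ χ hχ, hTexp, hT0, one_mul, sub_zero]

/-- The unique `C¹`, integrable, normalized solution on `[0,∞)` of
`ψ(χ) + χψ'(χ) + χψ(χ) = ∫_χ^∞ ψ(x) dx` vanishing at infinity is `ψ(χ) = e^{-χ}`. -/
theorem scaling_equation_unique_solution (ψ : ℝ → ℝ)
    (hC : ContDiff ℝ 1 ψ)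
    (hint : IntegrableOn ψ (Set.Ici (0:ℝ)))
    (heq : ∀ χ : ℝ, 0 ≤ χ →
      ψ χ + χ * deriv ψ χ + χ * ψ χ = ∫ x in Set.Ioi χ, ψ x)
    (hlim : Tendsto ψ atTop (nhds 0))
    (hnorm : ∫ x in Set.Ici (0:ℝ), ψ x = 1) :
    ∀ χ : ℝ, 0 ≤ χ → ψ χ = Real.exp (-χ) :=
  scaling_equation_unique_solution_general ψ hC hint heq hnorm
end
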